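/- arXiv:1210.2120 — 10 statements merged into one kernel-verified Lean document; each statement's English description precedes it below -/
import Mathlib

section
/- Let K be a class of nonempty topological spaces and let P be a nonempty family of filters on a set I. Then the following are equivalent: (1) every product of sequencewise P-compact spaces that are members of K (repetitions among the factors allowed) is sequencewise P-compact; (2) every product of |P| many sequencewise P-compact spaces that are members of K (repetitions allowed) is sequencewise P-compact; (3) there exists a filter F ∈ P such that sequencewise P-compactness is equivalent in K to F-compactness. -/
universe u

/-- `p` is an `F`-limit point of the `I`-indexed sequence `s`: every open
neighborhood of `p` captures the sequence on a set of indices belonging to `F`. -/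
def FLimitPt {I : Type*} {X : Type*} [TopologicalSpace X] (F : Filter I)
    (s : I → X) (p : X) : Prop :=
  ∀ U : Set X, IsOpen U → p ∈ U → {i | s i ∈ U} ∈ F

/-- `X` is `F`-compact: every `I`-indexed sequence in `X` has an `F`-limit point. -/
def FCompact {I : Type*} (F : Filter I) (X : Type*) [TopologicalSpace X] : Prop :=
  ∀ s : I → X, ∃ p : X, FLimitPt F s p

/-- `X` is sequencewise `P`-compact: every `I`-indexed sequence in `X` has an
`F`-limit point for some `F ∈ P`. -/
def SeqwisePCompact {I : Type*} (P : Set (Filter I)) (X : Type*)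
    [TopologicalSpace X] : Prop :=
  ∀ s : I → X, ∃ F ∈ P, ∃ p : X, FLimitPt F s p


lemma FLimitPt.comp {I X Y : Type*} [TopologicalSpace X] [TopologicalSpace Y]
    {F : Filter I} {s : I → X} {p : X} (h : FLimitPt F s p) {f : X → Y}
    (hf : Continuous f) : FLimitPt F (fun i => f (s i)) (f p) := by
  intro U hU hp
  exact h (f ⁻¹' U) (hU.preimage hf) hp

lemma fcompact_pi {I : Type*} (F : Filter I) {J : Type*} (X : J → Type*)
    [∀ j, TopologicalSpace (X j)] (h : ∀ j, FCompact F (X j)) :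
    FCompact F (∀ j, X j) := by
  intro s
  choose p hp using fun j => h j (fun i => s i j)
  refine ⟨p, fun U hU hpU => ?_⟩
  obtain ⟨t, u, hu, hsub⟩ := (isOpen_pi_iff.mp hU) p hpU
  have : (⋂ j ∈ t, {i | s i j ∈ u j}) ∈ F := by
    refine (Filter.biInter_finset_mem t).mpr fun j hj => ?_
    exact hp j (u j) (hu j hj).1 (hu j hj).2
  refine F.mem_of_superset this fun i hi => hsub fun j hj => ?_
  simpa using Set.mem_iInter₂.mp hi j hj

theorem stmt_0 {I : Type u} (P : Set (Filter I)) (hP : P.Nonempty)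
    (K : ∀ X : Type u, TopologicalSpace X → Prop)
    (hne : ∀ (X : Type u) (t : TopologicalSpace X), K X t → Nonempty X) :
    List.TFAE
      [ -- (1) every product of sequencewise `P`-compact members of `K`
        -- is sequencewise `P`-compact
        ∀ (J : Type u) (X : J → Type u) [t : ∀ j, TopologicalSpace (X j)],
          (∀ j, K (X j) (t j)) → (∀ j, SeqwisePCompact P (X j)) →
          SeqwisePCompact P (∀ j, X j),
        -- (2) every product of `|P|` many sequencewise `P`-compact members of `K`
        -- is sequencewise `P`-compact
        ∀ (X : P → Type u) [t : ∀ F : P, TopologicalSpace (X F)],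
          (∀ F, K (X F) (t F)) → (∀ F, SeqwisePCompact P (X F)) →
          SeqwisePCompact P (∀ F, X F),
        -- (3) sequencewise `P`-compactness is equivalent in `K` to `F`-compactness
        -- for some `F ∈ P`
        ∃ F ∈ P, ∀ (X : Type u) [t : TopologicalSpace X], K X t →
          (SeqwisePCompact P X ↔ FCompact F X) ] := by
  tfae_have 1 → 2 := by
    intro h1 X t hK hc
    exact h1 P X hK hc
  tfae_have 2 → 3 := by
    intro h2
    by_contra h3
    push_neg at h3
    -- for each F ∈ P, get a member of K that is seqwise P-compact but not F-compact
    have key : ∀ F : P, ∃ (X : Type u) (t : TopologicalSpace X),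
        K X t ∧ SeqwisePCompact P X ∧ ¬ FCompact (F : Filter I) X := by
      rintro ⟨F, hF⟩
      obtain ⟨X, t, hK, hiff⟩ := h3 F hF
      rcases hiff with ⟨ha, hb⟩ | ⟨hna, hb⟩
      · exact ⟨X, t, hK, ha, hb⟩
      · exact absurd (fun seq => ⟨F, hF, hb seq⟩) hna
    choose X t hK hsw hnc using key
    have hseq : ∀ F : P, ∃ s : I → X F, ∀ p, ¬ FLimitPt (F : Filter I) s p := by
      intro F
      have := hnc F
      unfold FCompact at this
      push_neg at this
      exact this
    choose s hs using hseq
    obtain ⟨G, hG, p, hp⟩ := h2 X hK hsw (fun i F => s F i)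
    have := hp.comp (f := fun g : ∀ F : P, X F => g ⟨G, hG⟩)
      (continuous_apply (⟨G, hG⟩ : P))
    exact hs ⟨G, hG⟩ (p ⟨G, hG⟩) this
  tfae_have 3 → 1 := by
    rintro ⟨F, hF, hiff⟩ J X t hK hc
    have hfc : ∀ j, FCompact F (X j) := fun j => (hiff (X j) (hK j)).mp (hc j)
    intro seq
    obtain ⟨p, hp⟩ := fcompact_pi F X hfc seq
    exact ⟨F, hF, p, hp⟩
  tfae_finish
end

section
/- Let K be a class of nonempty topological spaces that is closed under taking arbitrary products, and let P be a nonempty family of filters on a set I. Then every product of sequencewise P-compact members of K is sequencewise P-compact if and only if there exist a set J and a filter F on J such that sequencewise P-compactness is equivalent in K to F-compactness. -/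
universe u v

theorem flimit_iff {I X : Type*} [TopologicalSpace X] {F : Filter I} {s : I → X} {p : X} :
    FLimitPt F s p ↔ F ≤ Filter.comap s (nhds p) := by
  constructor
  · intro h A hA
    rcases Filter.mem_comap.mp hA with ⟨V, hV, hVA⟩
    rcases mem_nhds_iff.mp hV with ⟨U, hUV, hU, hpU⟩
    exact Filter.mem_of_superset (h U hU hpU) (fun i hi => hVA (Set.mem_of_mem_of_subset hi (Set.preimage_mono hUV)))
  · intro h U hU hpU
    exact h (Filter.preimage_mem_comap (hU.mem_nhds hpU))

theorem stmt_1 {I : Type u} (P : Set (Filter I)) (hP : P.Nonempty)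
    (K : ∀ X : Type u, TopologicalSpace X → Prop)
    (hne : ∀ (X : Type u) (t : TopologicalSpace X), K X t → Nonempty X)
    -- `K` is closed under taking arbitrary products
    (hclosed : ∀ (J : Type u) (X : J → Type u) (t : ∀ j, TopologicalSpace (X j)),
      (∀ j, K (X j) (t j)) → K (∀ j, X j) (@Pi.topologicalSpace J X t)) :
    -- every product of sequencewise `P`-compact members of `K` is sequencewise
    -- `P`-compact iff sequencewise `P`-compactness is equivalent in `K` to
    -- `F`-compactness for some filter `F` on some set `J`
    (∀ (J : Type u) (X : J → Type u) [t : ∀ j, TopologicalSpace (X j)],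
        (∀ j, K (X j) (t j)) → (∀ j, SeqwisePCompact P (X j)) →
        SeqwisePCompact P (∀ j, X j))
    ↔ ∃ (J : Type u) (F : Filter J),
        ∀ (X : Type u) [t : TopologicalSpace X], K X t →
          (SeqwisePCompact P X ↔ FCompact F X) := by
  classical
  constructor
  · intro hprod
    -- the set of "patterns" of sequences in sequencewise P-compact members of K
    set Λ : Set (Set (Filter I)) :=
      {A | ∃ (X : Type u) (t : TopologicalSpace X) (s : I → X),
        K X t ∧ SeqwisePCompact P X ∧ Set.range (fun p => Filter.comap s (nhds p)) = A}
      with hΛ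
    have repX : ∀ lam : Λ, ∃ (X : Type u) (t : TopologicalSpace X) (s : I → X),
        K X t ∧ SeqwisePCompact P X ∧ Set.range (fun p => Filter.comap s (nhds p)) = lam.1 :=
      fun lam => lam.2
    choose X t s hK' hPc' hpat using repX
    letI : ∀ lam : Λ, TopologicalSpace (X lam) := t
    have hYc : SeqwisePCompact P (∀ lam : Λ, X lam) := hprod Λ X hK' hPc'
    obtain ⟨G, hG, q, hq⟩ := hYc (fun i lam => s lam i)
    refine ⟨I, G, ?_⟩
    intro Z tZ hKZ
    constructor
    · intro hZc s'
      have hA : Set.range (fun p => Filter.comap s' (nhds p)) ∈ Λ :=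
        ⟨Z, tZ, s', hKZ, hZc, rfl⟩
      set lam : Λ := ⟨_, hA⟩ with hlam
      have hql : FLimitPt G (s lam) (q lam) := by
        intro U hU hqU
        exact hq ((fun y : ∀ lam : Λ, X lam => y lam) ⁻¹' U)
          (hU.preimage (continuous_apply lam)) hqU
      have hmem : Filter.comap (s lam) (nhds (q lam)) ∈ (lam : Set (Filter I)) := by
        rw [← hpat lam]
        exact ⟨q lam, rfl⟩
      have hmem' : ∃ pz : Z, Filter.comap s' (nhds pz) = Filter.comap (s lam) (nhds (q lam)) :=
        hmem
      obtain ⟨p, hp⟩ := hmem'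
      refine ⟨p, flimit_iff.mpr ?_⟩
      rw [hp]
      exact flimit_iff.mp hql
    · intro hZF s'
      obtain ⟨p, hp⟩ := hZF s'
      exact ⟨G, hG, p, hp⟩
  · rintro ⟨J, F, hF⟩ J' X t hK hPc
    have hFX : ∀ j, FCompact F (X j) := fun j => (hF (X j) (hK j)).mp (hPc j)
    have hKP := hclosed J' X t hK
    refine (hF _ hKP).mpr ?_
    intro sq
    have hchoice : ∀ j, ∃ p, FLimitPt F (fun k => sq k j) p := fun j => hFX j _
    choose p hp using hchoice
    refine ⟨p, ?_⟩
    intro U hU hpU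
    obtain ⟨Fn, u, hu, hsub⟩ := (isOpen_pi_iff.mp hU) p hpU
    have hmem : (⋂ a ∈ Fn, {k | sq k a ∈ u a}) ∈ F :=
      (Filter.biInter_finset_mem Fn).mpr (fun a ha => hp a (u a) (hu a ha).1 (hu a ha).2)
    refine Filter.mem_of_superset hmem ?_
    intro k hk
    apply hsub
    intro a ha
    simp only [Set.mem_iInter, Set.mem_setOf_eq] at hk
    exact hk a ha
end

section
/- Let K be a class of nonempty topological spaces, let P be a nonempty family of filters on a set I, and let F be a filter over a set J such that sequencewise P-compactness is equivalent in K to F-compactness. If there exists a sequencewise P-compact member of K that has two disjoint nonempty closed subsets, then F is an ultrafilter. -/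
universe u v

theorem stmt_2 {I : Type u} {J : Type v} (P : Set (Filter I)) (hP : P.Nonempty)
    (K : ∀ X : Type u, TopologicalSpace X → Prop)
    (hne : ∀ (X : Type u) (t : TopologicalSpace X), K X t → Nonempty X)
    (F : Filter J)
    -- sequencewise `P`-compactness is equivalent in `K` to `F`-compactness
    (heq : ∀ (X : Type u) (t : TopologicalSpace X), K X t →
      (@SeqwisePCompact I P X t ↔ @FCompact J F X t))
    -- some sequencewise `P`-compact member of `K` has two disjoint nonempty
    -- closed subsets
    (hex : ∃ (X : Type u) (t : TopologicalSpace X), K X t ∧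
      @SeqwisePCompact I P X t ∧
      ∃ C D : Set X, @IsClosed X t C ∧ @IsClosed X t D ∧
        C.Nonempty ∧ D.Nonempty ∧ Disjoint C D) :
    -- `F` is an ultrafilter
    ∀ A : Set J, A ∈ F ∨ Aᶜ ∈ F := by
  classical
  intro A
  obtain ⟨X, t, hK, hsw, C, D, hC, hD, ⟨c, hc⟩, ⟨d, hd⟩, hdisj⟩ := hex
  have hFc : @FCompact J F X t := (heq X t hK).mp hsw
  set s : J → X := fun j => if j ∈ A then c else d with hs
  obtain ⟨p, hp⟩ := hFc s
  have hcd : p ∉ C ∨ p ∉ D := by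
    by_contra h
    push_neg at h
    exact (Set.disjoint_left.mp hdisj h.1) h.2
  rcases hcd with h | h
  · right
    have := hp Cᶜ hC.isOpen_compl h
    have heq2 : {j | s j ∈ Cᶜ} = Aᶜ := by
      ext j
      by_cases hj : j ∈ A <;> simp [hs, hj, hc, Set.disjoint_left.mp hdisj.symm hd]
    rwa [heq2] at this
  · left
    have := hp Dᶜ hD.isOpen_compl h
    have heq2 : {j | s j ∈ Dᶜ} = A := by
      ext j
      by_cases hj : j ∈ A <;> simp [hs, hj, hd, Set.disjoint_left.mp hdisj hc]
    rwa [heq2] at this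
end

section
/- Let F be a filter over a set J that is not an ultrafilter, and let X be a topological space that has two disjoint nonempty closed subsets. Then X is not F-compact; that is, there exists a J-indexed sequence of elements of X having no F-limit point. -/
universe u v

theorem stmt_3 {J : Type v} (F : Filter J)
    -- `F` is not an ultrafilter
    (hF : ¬ ∀ A : Set J, A ∈ F ∨ Aᶜ ∈ F)
    (X : Type u) [TopologicalSpace X]
    -- `X` has two disjoint nonempty closed subsets
    (C D : Set X) (hC : IsClosed C) (hD : IsClosed D)
    (hCne : C.Nonempty) (hDne : D.Nonempty) (hCD : Disjoint C D) :
    -- `X` is not `F`-compact: some `J`-indexed sequence has no `F`-limit point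
    ∃ s : J → X, ∀ p : X, ¬ FLimitPt F s p := by
  classical
  push_neg at hF
  obtain ⟨A, hA, hAc⟩ := hF
  obtain ⟨c, hc⟩ := hCne
  obtain ⟨d, hd⟩ := hDne
  refine ⟨fun j => if j ∈ A then c else d, fun p hp => ?_⟩
  have hpC : p ∉ C ∨ p ∉ D := by
    by_contra h
    push_neg at h
    exact (hCD.ne_of_mem h.1 h.2) rfl
  rcases hpC with h | h
  · have := hp Cᶜ hC.isOpen_compl h
    exact hAc (F.mem_of_superset this (fun j hj => by
      by_contra hjA
      simp only [Set.mem_setOf_eq, if_pos (not_not.mp hjA)] at hj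
      exact hj hc))
  · have := hp Dᶜ hD.isOpen_compl h
    exact hA (F.mem_of_superset this (fun j hj => by
      by_contra hjA
      simp only [Set.mem_setOf_eq, if_neg hjA] at hj
      exact hj hd))
end

section
/- Let K be a class of nonempty topological spaces and let P be a nonempty family of filters on a set I. Then the following are equivalent: (1) every product of members of K (repetitions among the factors allowed) is sequencewise P-compact; (2) every product of |P| many members of K (repetitions allowed) is sequencewise P-compact; (3) there exists a filter F ∈ P such that every member of K is F-compact. -/
universe u v

lemma flimitpt_iff_tendsto {I X : Type*} [TopologicalSpace X] (F : Filter I)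
    (s : I → X) (p : X) : FLimitPt F s p ↔ Filter.Tendsto s F (nhds p) := by
  constructor
  · intro h
    rw [Filter.tendsto_def]
    intro U hU
    rcases mem_nhds_iff.mp hU with ⟨V, hVU, hVopen, hpV⟩
    exact Filter.mem_of_superset (h V hVopen hpV) fun i hi => hVU hi
  · intro h U hUopen hpU
    exact h (hUopen.mem_nhds hpU)

theorem stmt_4 {I : Type u} (P : Set (Filter I)) (hP : P.Nonempty)
    (K : ∀ X : Type u, TopologicalSpace X → Prop)
    (hne : ∀ (X : Type u) (t : TopologicalSpace X), K X t → Nonempty X) :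
    List.TFAE
      [ -- (1) every product of members of `K` is sequencewise `P`-compact
        ∀ (J : Type u) (X : J → Type u) [t : ∀ j, TopologicalSpace (X j)],
          (∀ j, K (X j) (t j)) → SeqwisePCompact P (∀ j, X j),
        -- (2) every product of `|P|` many members of `K` is sequencewise
        -- `P`-compact
        ∀ (X : P → Type u) [t : ∀ F : P, TopologicalSpace (X F)],
          (∀ F, K (X F) (t F)) → SeqwisePCompact P (∀ F, X F),
        -- (3) there is `F ∈ P` such that every member of `K` is `F`-compact
        ∃ F ∈ P, ∀ (X : Type u) [t : TopologicalSpace X], K X t →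
          FCompact F X ] := by
  tfae_have 1 → 2 := by
    intro h1 X t hK
    exact h1 P X hK
  tfae_have 2 → 3 := by
    intro h2
    by_contra hcon
    push_neg at hcon
    -- for each F ∈ P, there is a space in K that is not F-compact
    have hch : ∀ F : P, ∃ (X : Type u) (t : TopologicalSpace X),
        K X t ∧ ∃ s : I → X, ∀ p : X, ¬ FLimitPt (F : Filter I) s p := by
      intro ⟨F, hF⟩
      rcases hcon F hF with ⟨X, t, hKX, hnc⟩
      refine ⟨X, t, hKX, ?_⟩
      simp only [FCompact, not_forall, not_exists] at hnc
      exact hnc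
    choose X t hKX s hs using hch
    rcases h2 X hKX (fun i F => s F i) with ⟨G, hG, p, hp⟩
    rw [flimitpt_iff_tendsto] at hp
    refine hs ⟨G, hG⟩ (p ⟨G, hG⟩) ?_
    rw [flimitpt_iff_tendsto]
    exact ((continuous_apply (⟨G, hG⟩ : P)).tendsto p).comp hp
  tfae_have 3 → 1 := by
    rintro ⟨F, hF, hFc⟩ J X t hK s
    have hp : ∀ j, ∃ p : X j, FLimitPt F (fun i => s i j) p := fun j =>
      hFc (X j) (hK j) (fun i => s i j)
    choose p hp using hp
    refine ⟨F, hF, p, ?_⟩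
    rw [flimitpt_iff_tendsto, tendsto_pi_nhds]
    intro j
    rw [← flimitpt_iff_tendsto]
    exact hp j
  tfae_finish
end

section
/- Let K be a class of nonempty topological spaces. Then the following are equivalent: (1) every product of members of K (repetitions among the factors allowed) is countably compact; (2) every product of 2^{2^{ℵ₀}} many members of K (repetitions allowed) is countably compact; (3) there exists a uniform (i.e., free) ultrafilter F on ω such that every member of K is F-compact. -/
universe u v

open Cardinal

/-- A space is countably compact if every countable open cover has a finite
subcover. -/
def CountablyCompact (X : Type*) [TopologicalSpace X] : Prop :=
  ∀ 𝒰 : Set (Set X), 𝒰.Countable → (∀ U ∈ 𝒰, IsOpen U) → ⋃₀ 𝒰 = Set.univ →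
    ∃ 𝒱 ⊆ 𝒰, 𝒱.Finite ∧ ⋃₀ 𝒱 = Set.univ

/-!
A free ultrafilter `F` on `ℕ` turns `F`-compactness into countable compactness (an `F`-limit
of a sequence is a cluster point of it), and `F`-compactness is productive, so (3) gives (1).
Conversely, if (3) fails, every free ultrafilter `F` has a witness `s_F : ℕ → X_F` with
`X_F ∈ K` and no `F`-limit. There are at most `2 ^ 2 ^ ℵ₀` ultrafilters on `ℕ`, so a product of
`2 ^ 2 ^ ℵ₀` members of `K` contains every `X_F` as a factor. If this product is countably
compact, the sequence with coordinates `s_F` has a cluster point, hence a limit along some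
free ultrafilter `F`, and projecting to the factor `X_F` yields an `F`-limit of `s_F`.
-/

open Filter Topology Set

theorem flimitPt_iff_tendsto {I X : Type*} [TopologicalSpace X] {F : Filter I} {s : I → X}
    {p : X} : FLimitPt F s p ↔ Tendsto s F (𝓝 p) := by
  rw [(nhds_basis_opens p).tendsto_right_iff]
  exact ⟨fun h U hU => h U hU.2 hU.1, fun h U hU hpU => h U ⟨hpU, hU⟩⟩

theorem FCompact.pi {I ι : Type*} {X : ι → Type*} [∀ j, TopologicalSpace (X j)] {F : Filter I}
    (h : ∀ j, FCompact F (X j)) : FCompact F (∀ j, X j) := by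
  intro s
  choose p hp using fun j => h j fun n => s n j
  exact ⟨p, flimitPt_iff_tendsto.2 <| tendsto_pi_nhds.2 fun j => flimitPt_iff_tendsto.1 (hp j)⟩

theorem countablyCompact_iff_countablyCompactSpace {X : Type*} [TopologicalSpace X] :
    CountablyCompact X ↔ CountablyCompactSpace X := by
  rw [← isCountablyCompact_univ_iff]
  constructor
  · refine fun h => isCountablyCompact_iff_countable_open_cover'.2 fun U hU hcov => ?_
    obtain ⟨t, -, ht, htcov⟩ := exists_subset_image_finite_and.1 <|
      h (U '' univ) (countable_univ.image U) (forall_mem_image.2 fun i _ => hU i)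
        (by simpa [sUnion_image, univ_subset_iff] using hcov)
    exact ⟨t, ht, by rw [← sUnion_image, htcov]⟩
  · intro h 𝒰 h𝒰 hU hcov
    obtain ⟨𝒱, h𝒱𝒰, h𝒱, h𝒱cov⟩ :=
      h.elim_finite_subcover_image h𝒰 hU (by rw [← sUnion_eq_biUnion, hcov])
    exact ⟨𝒱, h𝒱𝒰, h𝒱, univ_subset_iff.1 (sUnion_eq_biUnion ▸ h𝒱cov)⟩

theorem Ultrafilter.forall_mem_infinite_iff_le_cofinite {α : Type*} {F : Ultrafilter α} :
    (∀ A ∈ F, A.Infinite) ↔ (F : Filter α) ≤ cofinite := by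
  refine ⟨fun h s hs => ?_, fun h A hA => ?_⟩
  · by_contra hsF
    exact h _ (compl_mem_iff_notMem.2 hsF) hs
  · exact frequently_cofinite_mem_iff_infinite.1 <|
      (show ∀ᶠ x in (F : Filter α), x ∈ A from hA).frequently.filter_mono h

theorem CountablyCompactSpace.of_fCompact {X : Type*} [TopologicalSpace X] {F : Ultrafilter ℕ}
    (hF : (F : Filter ℕ) ≤ atTop) (h : FCompact (F : Filter ℕ) X) : CountablyCompactSpace X := by
  refine isCountablyCompact_univ_iff.1 <| isCountablyCompact_iff_seq_clusterPt.2 fun x _ => ?_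
  obtain ⟨p, hp⟩ := h x
  exact ⟨p, mem_univ p, (flimitPt_iff_tendsto.1 hp).mapClusterPt.mono hF⟩

theorem CountablyCompactSpace.exists_ultrafilter_tendsto {X : Type*} [TopologicalSpace X]
    [CountablyCompactSpace X] (x : ℕ → X) :
    ∃ F : Ultrafilter ℕ, (F : Filter ℕ) ≤ atTop ∧ ∃ p, Tendsto x F (𝓝 p) := by
  obtain ⟨p, -, hp⟩ := isCountablyCompact_univ.seq_clusterPt x (.of_forall fun n => mem_univ _)
  obtain ⟨F, hF, hx⟩ := mapClusterPt_iff_ultrafilter.1 hp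
  exact ⟨F, hF, p, hx⟩

theorem CountablyCompactSpace.exists_ultrafilter_forall_tendsto_pi {ι : Type*} {X : ι → Type*}
    [∀ j, TopologicalSpace (X j)] [CountablyCompactSpace (∀ j, X j)] (x : ∀ j, ℕ → X j) :
    ∃ F : Ultrafilter ℕ, (F : Filter ℕ) ≤ atTop ∧ ∀ j, ∃ p, Tendsto (x j) F (𝓝 p) := by
  obtain ⟨F, hF, p, hp⟩ := exists_ultrafilter_tendsto fun n j => x j n
  exact ⟨F, hF, fun j => ⟨p j, tendsto_pi_nhds.1 hp j⟩⟩

theorem Ultrafilter.exists_surjective_ulift_set_set {α : Type v} {P : Ultrafilter α → Prop}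
    (hP : ∃ F, P F) : ∃ r : ULift.{u} (Set (Set α)) → {F // P F}, Function.Surjective r := by
  have : Nonempty {F // P F} := nonempty_subtype.2 hP
  let e : {F // P F} ↪ ULift.{u} (Set (Set α)) :=
    ⟨fun F => ⟨F.1.1.sets⟩, fun F G h =>
      Subtype.ext <| coe_injective <| Filter.filter_eq <| congrArg ULift.down h⟩
  exact ⟨Function.invFun e, Function.invFun_surjective e.injective⟩

theorem stmt_6_general (K : ∀ X : Type u, TopologicalSpace X → Prop) :
    List.TFAE
      [ -- (1) every product of members of `K` is countably compact
        ∀ (J : Type u) (X : J → Type u) [t : ∀ j, TopologicalSpace (X j)],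
          (∀ j, K (X j) (t j)) → CountablyCompact (∀ j, X j),
        -- (2) every product of `2 ^ 2 ^ ℵ₀` many members of `K` is countably
        -- compact
        ∀ (J : Type u), #J = (2 : Cardinal.{u}) ^ ((2 : Cardinal.{u}) ^ ℵ₀) →
          ∀ (X : J → Type u) [t : ∀ j, TopologicalSpace (X j)],
            (∀ j, K (X j) (t j)) → CountablyCompact (∀ j, X j),
        -- (3) there is a uniform (i.e. free) ultrafilter `F` on `ω` such that
        -- every member of `K` is `F`-compact
        ∃ F : Ultrafilter ℕ, (∀ A ∈ F, A.Infinite) ∧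
          ∀ (X : Type u) [t : TopologicalSpace X], K X t →
            FCompact (F : Filter ℕ) X ] := by
  have hfree (F : Ultrafilter ℕ) : (∀ A ∈ F, A.Infinite) ↔ (F : Filter ℕ) ≤ atTop :=
    Nat.cofinite_eq_atTop ▸ Ultrafilter.forall_mem_infinite_iff_le_cofinite
  tfae_have 1 → 2 := fun h1 J _ => h1 J
  tfae_have 3 → 1 := by
    rintro ⟨F, hF, hK⟩ J X t hKX
    exact countablyCompact_iff_countablyCompactSpace.2 <|
      .of_fCompact ((hfree F).1 hF) (.pi fun j => hK (X j) (hKX j))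
  tfae_have 2 → 3 := by
    intro h2
    by_contra! h3
    have hbad (F : {F : Ultrafilter ℕ // (F : Filter ℕ) ≤ atTop}) :
        ∃ (X : Type u) (t : TopologicalSpace X), K X t ∧ ∃ s : ℕ → X, ∀ p, ¬ FLimitPt F.1 s p := by
      obtain ⟨X, t, hKX, hX⟩ := h3 F.1 ((hfree F.1).2 F.2)
      simp only [FCompact, not_forall, not_exists] at hX
      exact ⟨X, t, hKX, hX⟩
    choose X t hK s hs using hbad
    obtain ⟨r, hr⟩ := Ultrafilter.exists_surjective_ulift_set_set.{u}
      (P := fun F : Ultrafilter ℕ => (F : Filter ℕ) ≤ atTop)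
      ⟨hyperfilter ℕ, Nat.cofinite_eq_atTop ▸ hyperfilter_le_cofinite⟩
    have : CountablyCompactSpace (∀ j, X (r j)) := countablyCompact_iff_countablyCompactSpace.1 <|
      h2 _ (by simp [Cardinal.mk_set]) _ fun j => hK (r j)
    obtain ⟨F, hF, hlim⟩ := CountablyCompactSpace.exists_ultrafilter_forall_tendsto_pi
      fun j => s (r j)
    obtain ⟨j, hj⟩ := hr ⟨F, hF⟩
    obtain ⟨p, hp⟩ := hlim j
    exact hs (r j) p (flimitPt_iff_tendsto.2 (by rwa [congrArg Subtype.val hj]))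
  tfae_finish

theorem stmt_6 (K : ∀ X : Type u, TopologicalSpace X → Prop)
    (hne : ∀ (X : Type u) (t : TopologicalSpace X), K X t → Nonempty X) :
    List.TFAE
      [ -- (1) every product of members of `K` is countably compact
        ∀ (J : Type u) (X : J → Type u) [t : ∀ j, TopologicalSpace (X j)],
          (∀ j, K (X j) (t j)) → CountablyCompact (∀ j, X j),
        -- (2) every product of `2 ^ 2 ^ ℵ₀` many members of `K` is countably
        -- compact
        ∀ (J : Type u), #J = (2 : Cardinal.{u}) ^ ((2 : Cardinal.{u}) ^ ℵ₀) →
          ∀ (X : J → Type u) [t : ∀ j, TopologicalSpace (X j)],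
            (∀ j, K (X j) (t j)) → CountablyCompact (∀ j, X j),
        -- (3) there is a uniform (i.e. free) ultrafilter `F` on `ω` such that
        -- every member of `K` is `F`-compact
        ∃ F : Ultrafilter ℕ, (∀ A ∈ F, A.Infinite) ∧
          ∀ (X : Type u) [t : TopologicalSpace X], K X t →
            FCompact (F : Filter ℕ) X ] :=
  stmt_6_general K
end

section
/- Let μ be an infinite regular cardinal, and endow the set of ordinals less than μ with the initial interval topology, whose open sets are exactly the intervals [0,α) for α ≤ μ. Then a topological space X fails to be [μ,μ]-compact if and only if there exists a continuous surjective function f : X → (μ, iit). -/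
universe u v

open Cardinal

/-- `X` is `[μ,λ]`-compact: every open cover of cardinality at most `lam` has a
subcover of cardinality strictly less than `μ`. -/
def IntervalCompact (μ lam : Cardinal.{u}) (X : Type u) [TopologicalSpace X] : Prop :=
  ∀ 𝒰 : Set (Set X), #𝒰 ≤ lam → (∀ U ∈ 𝒰, IsOpen U) → ⋃₀ 𝒰 = Set.univ →
    ∃ 𝒱 ⊆ 𝒰, #𝒱 < μ ∧ ⋃₀ 𝒱 = Set.univ

/-!
A space `X` fails to be `[μ,μ]`-compact exactly when some open cover `(U β)_{β<μ}` has no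
subcover of size `< μ`. Sending `x` to the least `β` with `x ∈ U β` is continuous into the initial
interval topology (the preimage of `[0, α)` is `⋃_{β<α} U β`) and has range unbounded in `μ`;
since `μ` is regular that range has order type `μ`, and collapsing it onto `μ` yields a continuous
surjection. Conversely, the preimages of the intervals `[0, α)`, `α < μ`, under a continuous
surjection form a cover; by regularity any `< μ` of them lie inside one `[0, γ)`, `γ < μ`, so
they miss the points mapped to `γ`.
-/

open Set Topology

theorem mk_range_le_card {α : Type u} {o : Ordinal.{u}} (F : Iio o → α) :
    #(range F) ≤ o.card := by
  have h := mk_range_le_lift (f := F)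
  rwa [Cardinal.mk_Iio_ordinal, lift_lift, lift_le] at h

-- In `ht` the equation `S = {β | (β : Ordinal) < α}` is between sets of ordinals: it reads
-- `Subtype.val '' S = Iio α`.
theorem continuous_iff_isOpen_setOf_coe_lt {o : Ordinal.{u}} {t : TopologicalSpace (Iio o)}
    (ht : ∀ S : Set (Iio o), IsOpen[t] S ↔ ∃ α ≤ o, S = {β | (β : Ordinal) < α})
    {X : Type v} [tX : TopologicalSpace X] {f : X → Iio o} :
    Continuous[tX, t] f ↔ ∀ α, IsOpen {x | (f x : Ordinal) < α} := by
  simp only [continuous_def, ht]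
  refine ⟨fun hf α => ?_, fun hf S ⟨α, _, hS⟩ => ?_⟩
  · rcases le_or_gt α o with hα | hα
    · refine hf {β | (β : Ordinal) < α} ⟨α, hα, ?_⟩
      rw [show {β : Iio o | (β : Ordinal) < α} = Subtype.val ⁻¹' Iio α from rfl,
        Subtype.image_preimage_coe, inter_eq_right.mpr (Iio_subset_Iio hα)]
      rfl
    · convert isOpen_univ
      exact eq_univ_of_forall fun x => (f x).2.trans hα
  · convert hf α using 1
    ext x
    rw [mem_preimage, ← Subtype.val_injective.mem_set_image, hS]
    rfl

theorem exists_iio_indexed_cover_of_not_intervalCompact {μ : Cardinal.{u}} (hμ : μ ≠ 0)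
    {X : Type u} [TopologicalSpace X] (hX : ¬ IntervalCompact μ μ X) :
    ∃ U : Iio μ.ord → Set X, (∀ β, IsOpen (U β)) ∧ (∀ x, ∃ β, x ∈ U β) ∧
      ∀ γ < μ.ord, ∃ x, ∀ β : Iio μ.ord, (β : Ordinal) < γ → x ∉ U β := by
  simp only [IntervalCompact, not_forall, not_exists, not_and] at hX
  obtain ⟨𝒰, h𝒰card, h𝒰open, h𝒰cover, hno⟩ := hX
  have : Nonempty 𝒰 := by
    by_contra h
    refine hno 𝒰 subset_rfl ?_ h𝒰cover
    rwa [mk_eq_zero_iff.mpr (not_nonempty_iff.mp h), pos_iff_ne_zero]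
  obtain ⟨j⟩ : Nonempty (𝒰 ↪ Iio μ.ord) := by
    rw [← lift_mk_le', Cardinal.mk_Iio_ordinal, card_ord, lift_lift, lift_le]
    exact h𝒰card
  let U : Iio μ.ord → Set X := fun β => (Function.invFun j β : 𝒰)
  have hU𝒰 : ∀ β, U β ∈ 𝒰 := fun β => (Function.invFun j β : 𝒰).2
  refine ⟨U, fun β => h𝒰open _ (hU𝒰 β), fun x => ?_, fun γ hγ => ?_⟩
  · obtain ⟨V, hV, hxV⟩ := h𝒰cover.symm ▸ mem_univ x
    exact ⟨j ⟨V, hV⟩, by rwa [show U _ = V from congrArg Subtype.val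
      (Function.leftInverse_invFun j.injective ⟨V, hV⟩)]⟩
  · let 𝒱 := range fun β : Iio γ => U ⟨β, β.2.trans hγ⟩
    have h𝒱card : #𝒱 < μ := (mk_range_le_card _).trans_lt (lt_ord.mp hγ)
    obtain ⟨x, hx⟩ := (ne_univ_iff_exists_notMem _).mp
      (hno 𝒱 (range_subset_iff.mpr fun β => hU𝒰 _) h𝒱card)
    exact ⟨x, fun β hβ hxβ => hx ⟨U β, ⟨⟨β, hβ⟩, rfl⟩, hxβ⟩⟩

theorem exists_unbounded_of_iio_indexed_cover {o : Ordinal.{u}} {X : Type v}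
    [TopologicalSpace X] {U : Iio o → Set X} (hU_open : ∀ β, IsOpen (U β))
    (hU_cover : ∀ x, ∃ β, x ∈ U β)
    (hU_small : ∀ γ < o, ∃ x, ∀ β : Iio o, (β : Ordinal) < γ → x ∉ U β) :
    ∃ f : X → Ordinal.{u}, (∀ x, f x < o) ∧ (∀ α, IsOpen {x | f x < α}) ∧
      ∀ γ < o, ∃ x, γ ≤ f x := by
  let f : X → Ordinal.{u} := fun x => sInf {β | ∃ hβ : β < o, x ∈ U ⟨β, hβ⟩}
  have hf_mem : ∀ x, ∃ hx : f x < o, x ∈ U ⟨f x, hx⟩ := fun x =>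
    csInf_mem (s := {β | ∃ hβ : β < o, x ∈ U ⟨β, hβ⟩})
      (let ⟨β, hβ⟩ := hU_cover x; ⟨β, β.2, hβ⟩)
  have hf_le : ∀ x (β : Iio o), x ∈ U β → f x ≤ β := fun x β hxβ =>
    csInf_le' ⟨β.2, hxβ⟩
  refine ⟨f, fun x => (hf_mem x).1, fun α => ?_, fun γ hγ => ?_⟩
  · have : {x | f x < α} = ⋃ (β : Iio o) (_ : (β : Ordinal) < α), U β := by
      ext x
      simp only [mem_ofPred_eq, mem_iUnion, exists_prop]
      refine ⟨fun hx => ⟨_, hx, (hf_mem x).2⟩, fun ⟨β, hβα, hxβ⟩ => ?_⟩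
      exact (hf_le x β hxβ).trans_lt hβα
    rw [this]
    exact isOpen_biUnion fun β _ => hU_open β
  · obtain ⟨x, hx⟩ := hU_small γ hγ
    exact ⟨x, not_lt.mp fun hlt => hx _ hlt (hf_mem x).2⟩

theorem enumOrd_lt_ord {μ : Cardinal.{u}} (hμ : μ.IsRegular) {s : Set Ordinal.{u}}
    (hs_cofinal : ∀ γ < μ.ord, ∃ a ∈ s, γ ≤ a ∧ a < μ.ord) :
    ∀ α < μ.ord, Ordinal.enumOrd s α < μ.ord := by
  intro α
  induction α using WellFoundedLT.induction with
  | _ α ih =>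
    intro hα
    have hsup : ⨆ b : Iio α, (Ordinal.enumOrd s b + 1) < μ.ord := by
      refine Ordinal.lift_iSup_add_one_lt_of_lt_cof ?_ fun b => ih b b.2 (b.2.trans hα)
      rwa [Cardinal.mk_Iio_ordinal, lift_lift, ← Ordinal.lift_cof, hμ.cof_ord, lift_lt, ← lt_ord]
    obtain ⟨a, has, hle, hlt⟩ := hs_cofinal _ hsup
    refine (Ordinal.enumOrd_le_of_forall_lt has fun b hb => ?_).trans_lt hlt
    exact (lt_add_one _).trans_le ((Ordinal.le_iSup _ (⟨b, hb⟩ : Iio α)).trans hle)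

theorem exists_surjective_of_unbounded {μ : Cardinal.{u}} (hμ : μ.IsRegular) {X : Type v}
    [TopologicalSpace X] {f : X → Ordinal.{u}} (hf_lt : ∀ x, f x < μ.ord)
    (hf_open : ∀ α, IsOpen {x | f x < α}) (hf_unbdd : ∀ γ < μ.ord, ∃ x, γ ≤ f x) :
    ∃ g : X → Iio μ.ord, (∀ α, IsOpen {x | (g x : Ordinal) < α}) ∧ Function.Surjective g := by
  -- padding `range f` with `Ici μ.ord` makes it unbounded without changing its part below `μ.ord`
  let s := range f ∪ Ici μ.ord
  have hs : ¬ BddAbove s := fun h => not_bddAbove_Ici μ.ord (h.mono subset_union_right)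
  have hs_lt : ∀ α < μ.ord, Ordinal.enumOrd s α < μ.ord :=
    enumOrd_lt_ord hμ fun γ hγ =>
      let ⟨x, hx⟩ := hf_unbdd γ hγ
      ⟨f x, .inl (mem_range_self x), hx, hf_lt x⟩
  let E := Ordinal.enumOrdOrderIso s hs
  let g : X → Ordinal.{u} := fun x => E.symm ⟨f x, .inl (mem_range_self x)⟩
  have hg_lt_iff : ∀ x α, g x < α ↔ f x < Ordinal.enumOrd s α := fun x α => by
    rw [← E.lt_iff_lt, E.apply_symm_apply]
    rfl
  have hg_lt : ∀ x, g x < μ.ord := fun x =>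
    (hg_lt_iff x _).mpr ((hf_lt x).trans_le (Ordinal.le_enumOrd_self hs))
  refine ⟨fun x => ⟨g x, hg_lt x⟩, fun α => ?_, fun ⟨α, hα⟩ => ?_⟩
  · simpa only [hg_lt_iff] using hf_open (Ordinal.enumOrd s α)
  · obtain ⟨x, hx⟩ : Ordinal.enumOrd s α ∈ range f :=
      (Ordinal.enumOrd_mem hs α).resolve_right (not_le.mpr (hs_lt α hα))
    exact ⟨x, Subtype.ext (E.symm_apply_eq.mpr (Subtype.ext hx))⟩

theorem not_intervalCompact_of_unbounded {μ : Cardinal.{u}} (hμ : μ.IsRegular) {X : Type u}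
    [TopologicalSpace X] {f : X → Ordinal.{u}} (hf_lt : ∀ x, f x < μ.ord)
    (hf_open : ∀ α, IsOpen {x | f x < α}) (hf_unbdd : ∀ γ < μ.ord, ∃ x, γ ≤ f x) :
    ¬ IntervalCompact μ μ X := by
  intro hX
  let F : Iio μ.ord → Set X := fun α => {x | f x < α}
  have hF_cover : ⋃₀ range F = Set.univ := eq_univ_of_forall fun x =>
    ⟨F ⟨_, (isSuccLimit_ord hμ.aleph0_le).succ_lt (hf_lt x)⟩, mem_range_self _,
      Order.lt_succ (f x)⟩
  obtain ⟨𝒱, h𝒱F, h𝒱card, h𝒱cover⟩ := hX (range F)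
    ((mk_range_le_card F).trans_eq (card_ord μ)) (forall_mem_range.mpr fun α => hf_open α)
    hF_cover
  choose idx hidx using fun V : 𝒱 => h𝒱F V.2
  obtain ⟨x, hx⟩ := hf_unbdd _ (Ordinal.iSup_lt_of_lt_cof (by rwa [hμ.cof_ord])
    fun V => (idx V : Iio μ.ord).2)
  obtain ⟨V, hV, hxV⟩ := h𝒱cover.symm ▸ mem_univ x
  have hxF : x ∈ F (idx ⟨V, hV⟩) := by rwa [hidx]
  exact (hx.trans_lt hxF).not_ge (Ordinal.le_iSup (fun V : 𝒱 => (idx V : Ordinal)) ⟨V, hV⟩)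

theorem stmt_10 (μ : Cardinal.{u})
    -- `μ` is an infinite regular cardinal
    (hreg : μ.IsRegular)
    -- `t` is the initial interval topology on the set of ordinals below `μ`:
    -- its open sets are exactly the intervals `[0, α)` for `α ≤ μ`
    (t : TopologicalSpace ↥(Set.Iio μ.ord))
    (ht : ∀ S : Set ↥(Set.Iio μ.ord),
      @IsOpen _ t S ↔ ∃ α ≤ μ.ord, S = {β | (β : Ordinal) < α})
    (X : Type u) [tX : TopologicalSpace X] :
    -- `X` fails to be `[μ,μ]`-compact iff there is a continuous surjection
    -- from `X` onto `(μ, iit)`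
    ¬ IntervalCompact μ μ X ↔
      ∃ f : X → ↥(Set.Iio μ.ord),
        @Continuous X ↥(Set.Iio μ.ord) tX t f ∧ Function.Surjective f := by
  rw [exists_congr fun f => and_congr_left' (continuous_iff_isOpen_setOf_coe_lt ht)]
  constructor
  · intro hX
    obtain ⟨U, hU_open, hU_cover, hU_small⟩ :=
      exists_iio_indexed_cover_of_not_intervalCompact hreg.pos.ne' hX
    obtain ⟨f, hf_lt, hf_open, hf_unbdd⟩ :=
      exists_unbounded_of_iio_indexed_cover hU_open hU_cover hU_small
    exact exists_surjective_of_unbounded hreg hf_lt hf_open hf_unbdd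
  · rintro ⟨f, hf_open, hf_surj⟩
    refine not_intervalCompact_of_unbounded hreg (fun x => (f x).2) hf_open fun γ hγ => ?_
    obtain ⟨x, hx⟩ := hf_surj ⟨γ, hγ⟩
    exact ⟨x, (congrArg Subtype.val hx).ge⟩
end

section
/- For every nonempty topological space X, the following are equivalent: (1) every sequence (x_n)_{n∈ω} of elements of X converges to some point of X; (2) X is ultraconnected and sequentially compact. -/
universe u v

open Cardinal

/-- The sequence `s` converges to `p`: every open neighborhood of `p` contains
`s n` for all but finitely many `n`. -/
def ConvergesTo {X : Type*} [TopologicalSpace X] (s : ℕ → X) (p : X) : Prop :=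
  ∀ U : Set X, IsOpen U → p ∈ U → ∃ N, ∀ n ≥ N, s n ∈ U

/-- `X` is sequentially compact: every sequence has a convergent subsequence. -/
def SequentiallyCompact (X : Type*) [TopologicalSpace X] : Prop :=
  ∀ s : ℕ → X, ∃ φ : ℕ → ℕ, StrictMono φ ∧ ∃ p, ConvergesTo (s ∘ φ) p

/-- `X` is ultraconnected: no two nonempty closed subsets are disjoint. -/
def Ultraconnected (X : Type*) [TopologicalSpace X] : Prop :=
  ∀ C D : Set X, IsClosed C → IsClosed D → C.Nonempty → D.Nonempty →
    (C ∩ D).Nonempty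

theorem stmt_14 (X : Type u) [TopologicalSpace X] [Nonempty X] :
    -- every sequence in `X` converges to some point iff `X` is ultraconnected
    -- and sequentially compact
    (∀ s : ℕ → X, ∃ p : X, ConvergesTo s p) ↔
      (Ultraconnected X ∧ SequentiallyCompact X) := by
  constructor
  · intro h
    constructor
    · rintro C D hC hD ⟨c, hc⟩ ⟨d, hd⟩
      obtain ⟨p, hp⟩ := h (fun n => if Even n then c else d)
      refine ⟨p, ?_, ?_⟩
      · by_contra hpC
        obtain ⟨N, hN⟩ := hp Cᶜ hC.isOpen_compl hpC
        have h2N := hN (2 * N) (by omega)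
        simp only [even_two_mul 2, if_pos (even_two_mul N)] at h2N
        exact h2N hc
      · by_contra hpD
        obtain ⟨N, hN⟩ := hp Dᶜ hD.isOpen_compl hpD
        have h2N := hN (2 * N + 1) (by omega)
        have : ¬ Even (2 * N + 1) := by simp [Nat.even_add_one]
        simp only [this, if_false] at h2N
        exact h2N hd
    · intro s
      exact ⟨id, strictMono_id, h s⟩
  · rintro ⟨hu, hsc⟩ s
    -- first, pick a point in each finite intersection of closures of singletons
    have key : ∀ k : ℕ, ∃ x : X, ∀ i ≤ k, x ∈ closure {s i} := by
      intro k
      induction k with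
      | zero =>
        exact ⟨s 0, fun i hi => by
          interval_cases i
          exact subset_closure rfl⟩
      | succ k ih =>
        obtain ⟨x, hx⟩ := ih
        have hCclosed : IsClosed (⋂ i ∈ Finset.range (k + 1), closure {s i}) :=
          isClosed_biInter (fun i _ => isClosed_closure)
        have hCne : (⋂ i ∈ Finset.range (k + 1), closure {s i}).Nonempty := by
          refine ⟨x, ?_⟩
          simp only [Set.mem_iInter, Finset.mem_range]
          intro i hi
          exact hx i (by omega)
        obtain ⟨y, hyC, hyD⟩ := hu _ (closure {s (k + 1)}) hCclosed isClosed_closure hCne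
          ⟨s (k + 1), subset_closure rfl⟩
        refine ⟨y, fun i hi => ?_⟩
        rcases Nat.lt_or_ge i (k + 1) with h' | h'
        · simp only [Set.mem_iInter, Finset.mem_range] at hyC
          exact hyC i h'
        · have : i = k + 1 := by omega
          subst this
          exact hyD
    choose x hx using key
    obtain ⟨φ, hφ, y, hy⟩ := hsc x
    have hyn : ∀ n, y ∈ closure {s n} := by
      intro n
      by_contra hyn
      obtain ⟨N, hN⟩ := hy (closure {s n})ᶜ isClosed_closure.isOpen_compl hyn
      have h1 := hN (max N n) (le_max_left _ _)
      have h2 : n ≤ φ (max N n) := le_trans (le_max_right _ _) (hφ.le_apply)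
      exact h1 (hx (φ (max N n)) n h2)
    refine ⟨y, fun U hU hyU => ⟨0, fun n _ => ?_⟩⟩
    obtain ⟨z, hzU, hz⟩ := mem_closure_iff.mp (hyn n) U hU hyU
    rwa [hz] at hzU
end

section
/- Let 𝔰 denote the splitting number, and let (X_j)_{j∈J} be a family of topological spaces such that |J| ≥ 𝔰 and no X_j is ultraconnected (in particular, each X_j has two disjoint nonempty closed subsets). Then the product ∏_{j∈J} X_j is not sequentially compact. -/
universe u v

open Cardinal

/-- The splitting number `𝔰`: the least cardinality of a splitting family of
subsets of `ω`. -/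
noncomputable def splittingNumber : Cardinal.{0} :=
  sInf {c : Cardinal | ∃ S : Set (Set ℕ), #S = c ∧
    ∀ A : Set ℕ, A.Infinite → ∃ s ∈ S, (A ∩ s).Infinite ∧ (A \ s).Infinite}

lemma exists_split (A : Set ℕ) (hA : A.Infinite) :
    ∃ s : Set ℕ, (A ∩ s).Infinite ∧ (A \ s).Infinite := by
  let f := hA.natEmbedding
  refine ⟨Set.range (fun n => (f (2 * n) : ℕ)), ?_, ?_⟩
  · have hsub : Set.range (fun n => (f (2 * n) : ℕ)) ⊆ A := by
      rintro x ⟨n, rfl⟩; exact (f (2 * n)).2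
    have : (Set.range (fun n => (f (2 * n) : ℕ))).Infinite := by
      apply Set.infinite_range_of_injective
      intro a b h
      have := f.injective (Subtype.ext h)
      omega
    exact this.mono (by intro x hx; exact ⟨hsub hx, hx⟩)
  · have : (Set.range (fun n => (f (2 * n + 1) : ℕ))).Infinite := by
      apply Set.infinite_range_of_injective
      intro a b h
      have := f.injective (Subtype.ext h)
      omega
    apply this.mono
    rintro x ⟨n, rfl⟩
    refine ⟨(f (2 * n + 1)).2, ?_⟩
    rintro ⟨m, hm⟩
    have := f.injective (Subtype.ext hm)
    omega

theorem stmt_15 (J : Type u) (X : J → Type u) [∀ j, TopologicalSpace (X j)]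
    -- `|J| ≥ 𝔰`
    (hJ : Cardinal.lift.{u} splittingNumber ≤ #J)
    -- no `X j` is ultraconnected
    (hX : ∀ j, ¬ Ultraconnected (X j)) :
    -- the product is not sequentially compact
    ¬ SequentiallyCompact (∀ j, X j) := by
  classical
  intro hseq
  have hne : {c : Cardinal | ∃ S : Set (Set ℕ), #S = c ∧
      ∀ A : Set ℕ, A.Infinite → ∃ s ∈ S, (A ∩ s).Infinite ∧ (A \ s).Infinite}.Nonempty := by
    refine ⟨#(Set.univ : Set (Set ℕ)), Set.univ, rfl, ?_⟩
    intro A hA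
    obtain ⟨s, h1, h2⟩ := exists_split A hA
    exact ⟨s, trivial, h1, h2⟩
  obtain ⟨S₀, hScard, hSsplit⟩ := csInf_mem hne
  have hle : Cardinal.lift.{u} #↥S₀ ≤ Cardinal.lift.{0} #J := by
    rw [hScard, Cardinal.lift_id'.{0,u}]
    exact hJ
  obtain ⟨e⟩ := Cardinal.lift_mk_le'.mp hle
  have hCD : ∀ j, ∃ C D : Set (X j), IsClosed C ∧ IsClosed D ∧ C.Nonempty ∧
      D.Nonempty ∧ C ∩ D = ∅ := by
    intro j
    have h := hX j
    unfold Ultraconnected at h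
    push_neg at h
    exact h
  choose C D hC hD hCne hDne hdisj using hCD
  choose c hc using hCne
  choose d hd using hDne
  set s : ℕ → ∀ j, X j := fun n j =>
    if h : ∃ t : S₀, e t = j then (if n ∈ (h.choose : Set ℕ) then c j else d j) else c j
    with hs
  obtain ⟨φ, hφ, p, hconv⟩ := hseq s
  have hA : (Set.range φ).Infinite := Set.infinite_range_of_injective hφ.injective
  obtain ⟨t, htS, h1, h2⟩ := hSsplit (Set.range φ) hA
  set j := e ⟨t, htS⟩ with hj
  have hex : ∃ t' : S₀, e t' = j := ⟨⟨t, htS⟩, rfl⟩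
  have hchoose : (hex.choose : Set ℕ) = t := by
    have h := e.injective hex.choose_spec
    rw [h]
  have hval : ∀ n, s n j = if n ∈ t then c j else d j := by
    intro n
    simp only [hs, dif_pos hex, hchoose]
  have hmemC : p j ∈ C j := by
    by_contra hpc
    obtain ⟨N, hN⟩ := hconv {x | x j ∉ C j}
      (((hC j).isOpen_compl).preimage (continuous_apply j)) hpc
    have hpre : (φ ⁻¹' (Set.range φ ∩ t)).Infinite :=
      h1.preimage (fun x hx => hx.1)
    obtain ⟨n, hn, hnN⟩ := hpre.exists_gt N
    have hmem := hN n hnN.le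
    apply hmem
    show s (φ n) j ∈ C j
    rw [hval]
    exact if_pos hn.2 ▸ hc j
  have hmemD : p j ∈ D j := by
    by_contra hpd
    obtain ⟨N, hN⟩ := hconv {x | x j ∉ D j}
      (((hD j).isOpen_compl).preimage (continuous_apply j)) hpd
    have hpre : (φ ⁻¹' (Set.range φ \ t)).Infinite :=
      h2.preimage (fun x hx => hx.1)
    obtain ⟨n, hn, hnN⟩ := hpre.exists_gt N
    have hmem := hN n hnN.le
    apply hmem
    show s (φ n) j ∈ D j
    rw [hval]
    exact if_neg hn.2 ▸ hd j
  have : p j ∈ C j ∩ D j := ⟨hmemC, hmemD⟩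
  rw [hdisj j] at this
  exact this
end

section
/- Let 𝔰 denote the splitting number. For every family T of nonempty topological spaces, the following are equivalent: (1) all products of members of T (repetitions among the factors allowed) are sequentially compact; (2) for every X ∈ T, the power X^{𝔰} is sequentially compact; (3) every X ∈ T has the property that every sequence in X converges to some point; (4) in every product of members of T, every sequence converges to some point. -/
universe u v

open Cardinal

/- ### Auxiliary lemmas -/

lemma convergesTo_iff_tendsto {X : Type*} [TopologicalSpace X] {s : ℕ → X} {p : X} :
    ConvergesTo s p ↔ Filter.Tendsto s Filter.atTop (nhds p) := by
  constructor
  · intro h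
    rw [tendsto_nhds]
    intro U hU hpU
    obtain ⟨N, hN⟩ := h U hU hpU
    exact Filter.mem_atTop_sets.mpr ⟨N, hN⟩
  · intro h U hU hpU
    exact Filter.mem_atTop_sets.mp ((tendsto_nhds.mp h) U hU hpU)

/-- There is a splitting family of cardinality `splittingNumber`. -/
lemma splittingNumber_spec :
    ∃ S : Set (Set ℕ), #S = splittingNumber ∧
      ∀ A : Set ℕ, A.Infinite → ∃ s ∈ S, (A ∩ s).Infinite ∧ (A \ s).Infinite := by
  have hsplit_univ : ∀ A : Set ℕ, A.Infinite →
      ∃ s ∈ (Set.univ : Set (Set ℕ)), (A ∩ s).Infinite ∧ (A \ s).Infinite := by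
    intro A hA
    have f : ℕ ↪ ↥A := Set.Infinite.natEmbedding A hA
    refine ⟨Set.range (fun k => (f (2 * k) : ℕ)), trivial, ?_, ?_⟩
    · have hginj : Function.Injective (fun k => (f (2 * k) : ℕ)) := by
        intro a b hab
        have h2 := f.injective (Subtype.ext hab)
        omega
      have hsub : Set.range (fun k => (f (2 * k) : ℕ)) ⊆ A := by
        rintro _ ⟨k, rfl⟩; exact (f (2 * k)).2
      rw [Set.inter_eq_self_of_subset_right hsub]
      exact Set.infinite_range_of_injective hginj
    · have hsub2 : Set.range (fun k => (f (2 * k + 1) : ℕ)) ⊆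
          A \ Set.range (fun k => (f (2 * k) : ℕ)) := by
        rintro _ ⟨k, rfl⟩
        refine ⟨(f (2 * k + 1)).2, ?_⟩
        rintro ⟨j, hj⟩
        have h2 := f.injective (Subtype.ext hj)
        omega
      refine Set.Infinite.mono hsub2 ?_
      refine Set.infinite_range_of_injective ?_
      intro a b hab
      have h2 := f.injective (Subtype.ext hab)
      omega
  have hne : {c : Cardinal | ∃ S : Set (Set ℕ), #S = c ∧
      ∀ A : Set ℕ, A.Infinite → ∃ s ∈ S, (A ∩ s).Infinite ∧ (A \ s).Infinite}.Nonempty :=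
    ⟨#(Set.univ : Set (Set ℕ)), Set.univ, rfl, hsplit_univ⟩
  have hmem := csInf_mem hne
  exact hmem

/-- A sequentially compact ultraconnected space has the property that every
sequence converges. -/
lemma converges_of_sc_ultra {X : Type u} [TopologicalSpace X]
    (hsc : SequentiallyCompact X) (hu : Ultraconnected X) (s : ℕ → X) :
    ∃ p, ConvergesTo s p := by
  -- points lying in the closures of all of `{s 0}, …, {s k}`
  have key : ∀ k : ℕ, ∃ x : X, ∀ n ≤ k, x ∈ closure {s n} := by
    intro k
    induction k with
    | zero =>
        exact ⟨s 0, fun n hn => by rw [Nat.le_zero.mp hn]; exact subset_closure rfl⟩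
    | succ k ih =>
        obtain ⟨x, hx⟩ := ih
        have hcl : IsClosed {y : X | ∀ n ≤ k, y ∈ closure {s n}} := by
          have heq : {y : X | ∀ n ≤ k, y ∈ closure {s n}} =
              ⋂ n, ⋂ (_ : n ≤ k), closure {s n} := by
            ext y; simp
          rw [heq]
          exact isClosed_iInter fun n => isClosed_iInter fun _ => isClosed_closure
        obtain ⟨y, hy1, hy2⟩ := hu _ (closure {s (k + 1)}) hcl isClosed_closure ⟨x, hx⟩
          ⟨s (k + 1), subset_closure rfl⟩
        refine ⟨y, fun n hn => ?_⟩
        rcases Nat.le_succ_iff.mp hn with h | h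
        · exact hy1 n h
        · rw [h]; exact hy2
  choose x hx using key
  obtain ⟨φ, hφ, z, hz⟩ := hsc x
  have hzin : ∀ n, z ∈ closure {s n} := by
    intro n
    by_contra hcon
    obtain ⟨N, hN⟩ := hz _ isClosed_closure.isOpen_compl hcon
    have hk : n ≤ φ (max N n) := le_trans (le_max_right N n) hφ.le_apply
    exact (hN (max N n) (le_max_left N n)) (hx (φ (max N n)) n hk)
  refine ⟨z, fun U hU hzU => ⟨0, fun n _ => ?_⟩⟩
  obtain ⟨w, hw1, hw2⟩ := mem_closure_iff.mp (hzin n) U hU hzU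
  rw [Set.mem_singleton_iff] at hw2
  rwa [hw2] at hw1

/-- If the power `X ^ 𝔰` is sequentially compact, then every sequence in `X`
converges. -/
lemma converges_of_powerSC {X : Type u} [TopologicalSpace X]
    (hpow : SequentiallyCompact (splittingNumber.out → X)) (s : ℕ → X) :
    ∃ p, ConvergesTo s p := by
  classical
  obtain ⟨S₀, hcard, hsplit₀⟩ := splittingNumber_spec
  obtain ⟨e⟩ : Nonempty (splittingNumber.out ≃ ↥S₀) :=
    Cardinal.eq.mp ((Cardinal.mk_out splittingNumber).trans hcard.symm)
  set Sfam : splittingNumber.out → Set ℕ := fun α => (e α : Set ℕ) with hSfam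
  have hsplit : ∀ A : Set ℕ, A.Infinite →
      ∃ α, (A ∩ Sfam α).Infinite ∧ (A \ Sfam α).Infinite := by
    intro A hA
    obtain ⟨sS, hsS, hh1, hh2⟩ := hsplit₀ A hA
    refine ⟨e.symm ⟨sS, hsS⟩, ?_, ?_⟩ <;>
      · simp only [hSfam, Equiv.apply_symm_apply]
        assumption
  obtain ⟨α₀⟩ : Nonempty splittingNumber.out := by
    obtain ⟨sS, hsS, -, -⟩ := hsplit₀ Set.univ Set.infinite_univ
    exact ⟨e.symm ⟨sS, hsS⟩⟩
  -- `X` itself is sequentially compact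
  have hsc : SequentiallyCompact X := by
    intro u
    obtain ⟨φ, hφ, p, hp⟩ := hpow (fun n _ => u n)
    refine ⟨φ, hφ, p α₀, ?_⟩
    rw [convergesTo_iff_tendsto]
    exact tendsto_pi_nhds.mp (convergesTo_iff_tendsto.mp hp) α₀
  -- a helper: infinite subsets of ℕ contain arbitrarily large elements
  have hklt : ∀ P : Set ℕ, P.Infinite → ∀ N, ∃ k, N ≤ k ∧ k ∈ P := by
    intro P hP N
    by_contra hcon
    push_neg at hcon
    refine hP (Set.Finite.subset (Set.finite_Iio N) fun k hk => ?_)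
    exact Set.mem_Iio.mpr (lt_of_not_ge fun h => hcon k h hk)
  -- `X` is ultraconnected
  have hu : Ultraconnected X := by
    rintro C D hC hD ⟨c, hc⟩ ⟨d, hd⟩
    set t' : ℕ → splittingNumber.out → X :=
      fun n α => if n ∈ Sfam α then c else d with ht'
    obtain ⟨φ, hφ, p, hp⟩ := hpow t'
    have hA : (Set.range φ).Infinite := Set.infinite_range_of_injective hφ.injective
    obtain ⟨α, hin, hout'⟩ := hsplit _ hA
    have hcoord := tendsto_pi_nhds.mp (convergesTo_iff_tendsto.mp hp) α
    have hpreIn : {k : ℕ | φ k ∈ Sfam α}.Infinite := by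
      intro hfin
      refine hin ?_
      have heq : Set.range φ ∩ Sfam α = φ '' {k | φ k ∈ Sfam α} := by
        ext w
        constructor
        · rintro ⟨⟨k, rfl⟩, hw⟩; exact ⟨k, hw, rfl⟩
        · rintro ⟨k, hk, rfl⟩; exact ⟨⟨k, rfl⟩, hk⟩
      rw [heq]
      exact hfin.image _
    have hpreOut : {k : ℕ | φ k ∉ Sfam α}.Infinite := by
      intro hfin
      refine hout' ?_
      have heq : Set.range φ \ Sfam α = φ '' {k | φ k ∉ Sfam α} := by
        ext w
        constructor
        · rintro ⟨⟨k, rfl⟩, hw⟩; exact ⟨k, hw, rfl⟩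
        · rintro ⟨k, hk, rfl⟩; exact ⟨⟨k, rfl⟩, hk⟩
      rw [heq]
      exact hfin.image _
    have hmemc : p α ∈ closure {c} := by
      rw [mem_closure_iff]
      intro U hU hpU
      obtain ⟨N, hN⟩ := Filter.eventually_atTop.mp (hcoord.eventually (hU.mem_nhds hpU))
      obtain ⟨k, hkN, hkS⟩ := hklt _ hpreIn N
      have hkS' : φ k ∈ Sfam α := hkS
      have hmem : t' (φ k) α ∈ U := hN k hkN
      rw [ht'] at hmem
      simp only [if_pos hkS'] at hmem
      exact ⟨c, hmem, rfl⟩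
    have hmemd : p α ∈ closure {d} := by
      rw [mem_closure_iff]
      intro U hU hpU
      obtain ⟨N, hN⟩ := Filter.eventually_atTop.mp (hcoord.eventually (hU.mem_nhds hpU))
      obtain ⟨k, hkN, hkS⟩ := hklt _ hpreOut N
      have hkS' : φ k ∉ Sfam α := hkS
      have hmem : t' (φ k) α ∈ U := hN k hkN
      rw [ht'] at hmem
      simp only [if_neg hkS'] at hmem
      exact ⟨d, hmem, rfl⟩
    exact ⟨p α, hC.closure_subset_iff.mpr (Set.singleton_subset_iff.mpr hc) hmemc,
      hD.closure_subset_iff.mpr (Set.singleton_subset_iff.mpr hd) hmemd⟩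
  exact converges_of_sc_ultra hsc hu s

theorem stmt_16 (T : ∀ X : Type u, TopologicalSpace X → Prop)
    (hne : ∀ (X : Type u) (t : TopologicalSpace X), T X t → Nonempty X) :
    List.TFAE
      [ -- (1) all products of members of `T` are sequentially compact
        ∀ (J : Type u) (X : J → Type u) [t : ∀ j, TopologicalSpace (X j)],
          (∀ j, T (X j) (t j)) → SequentiallyCompact (∀ j, X j),
        -- (2) for every `X ∈ T`, the power `X ^ 𝔰` is sequentially compact
        ∀ (X : Type u) [t : TopologicalSpace X], T X t →
          SequentiallyCompact (splittingNumber.out → X),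
        -- (3) in every `X ∈ T` every sequence converges
        ∀ (X : Type u) [t : TopologicalSpace X], T X t →
          ∀ s : ℕ → X, ∃ p, ConvergesTo s p,
        -- (4) in every product of members of `T` every sequence converges
        ∀ (J : Type u) (X : J → Type u) [t : ∀ j, TopologicalSpace (X j)],
          (∀ j, T (X j) (t j)) →
          ∀ s : ℕ → (∀ j, X j), ∃ p, ConvergesTo s p ] := by
  tfae_have 1 → 2 := by
    intro h1 X t hT s
    obtain ⟨φ, hφ, p, hp⟩ := @h1 (ULift.{u, 0} splittingNumber.out) (fun _ => X)
      (fun _ => t) (fun _ => hT) (fun n j => s n j.down)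
    refine ⟨φ, hφ, fun a => p (ULift.up a), ?_⟩
    rw [convergesTo_iff_tendsto, tendsto_pi_nhds]
    intro a
    exact tendsto_pi_nhds.mp (convergesTo_iff_tendsto.mp hp) (ULift.up a)
  tfae_have 2 → 3 := by
    intro h2 X t hT s
    exact converges_of_powerSC (@h2 X t hT) s
  tfae_have 3 → 4 := by
    intro h3 J Xf tf hTf s
    have H : ∀ j, ∃ pj, ConvergesTo (fun n => s n j) pj :=
      fun j => @h3 (Xf j) (tf j) (hTf j) _
    choose p hp using H
    refine ⟨p, ?_⟩
    rw [convergesTo_iff_tendsto, tendsto_pi_nhds]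
    intro j
    exact convergesTo_iff_tendsto.mp (hp j)
  tfae_have 4 → 1 := by
    intro h4 J Xf tf hTf s
    obtain ⟨p, hp⟩ := @h4 J Xf tf hTf s
    exact ⟨id, strictMono_id, p, hp⟩
  tfae_finish
end
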